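/- arXiv:0803.1283 — 2 statements merged into one kernel-verified Lean document; each statement's English description precedes it below -/
import Mathlib

section
/- Let X be a Banach space, M ≥ 1, and F ∈ 𝓕^X_{M,0} (i.e. a = 0), and fix t > 0. Then for every g ∈ X one has lim (F(t/k)^i − I)g = 0 as i/k → 0; precisely: for every ε > 0 there exists δ > 0 such that for all i, k ∈ ℕ with i/k < δ, ‖F(t/k)^i g − g‖ < ε. -/
open Filter Topology MeasureTheory

noncomputable section

variable {X : Type*} [NormedAddCommGroup X] [NormedSpace ℝ X] [CompleteSpace X]

/-- `y` is the value of the strong derivative at `0` of `F : [0,∞) → L(X)` at `ψ`. -/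
def DerivAtZero (F : ℝ → (X →L[ℝ] X)) (ψ y : X) : Prop :=
  Tendsto (fun h : ℝ => h⁻¹ • (F h ψ - F 0 ψ)) (𝓝[>] (0 : ℝ)) (𝓝 y)

/-- The class `𝓕^X_{M,a}`. -/
def MemFClass (F : ℝ → (X →L[ℝ] X)) (M a : ℝ) : Prop :=
  F 0 = 1 ∧
    (∀ n m : ℕ, 0 < n → 0 < m → ∀ s : ℝ, 0 ≤ s →
      ‖(F (s / n)) ^ m‖ ≤ M * Real.exp (a * m * s / n)) ∧
    Dense {ψ : X | ∃ y, DerivAtZero F ψ y}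

/-- The class `𝓕_X`. -/
def MemF (F : ℝ → (X →L[ℝ] X)) : Prop := ∃ M, 1 ≤ M ∧ ∃ a : ℝ, MemFClass F M a

/-- The adjoint of a bounded operator, acting on the dual space. -/
noncomputable def adjCLM (T : X →L[ℝ] X) :
    StrongDual ℝ X →L[ℝ] StrongDual ℝ X :=
  LinearMap.mkContinuous
    { toFun := fun φ => φ.comp T
      map_add' := fun φ ψ => by ext x; simp
      map_smul' := fun c φ => by ext x; simp }
    ‖T‖ (fun φ => by simpa [mul_comm] using φ.opNorm_comp_le T)

/-- `ψ` is the value at `φ` of the strong derivative at `0` of `s ↦ F(s)*`. -/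
def AdjDerivAtZero (F : ℝ → (X →L[ℝ] X)) (φ ψ : StrongDual ℝ X) : Prop :=
  Tendsto (fun h : ℝ => h⁻¹ • (adjCLM (F h) φ - adjCLM (F 0) φ)) (𝓝[>] (0 : ℝ)) (𝓝 ψ)

/-- A `C₀`-semigroup on `X` (as a function on `[0,∞)`, modelled on all of `ℝ`). -/
def IsC0Semigroup (S : ℝ → (X →L[ℝ] X)) : Prop :=
  S 0 = 1 ∧ (∀ a b : ℝ, 0 ≤ a → 0 ≤ b → S (a + b) = S a * S b) ∧
    (∀ x : X, ContinuousOn (fun s => S s x) (Set.Ici (0 : ℝ))) ∧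
    ∃ M, 1 ≤ M ∧ ∃ w : ℝ, ∀ s : ℝ, 0 ≤ s → ‖S s‖ ≤ M * Real.exp (w * s)

/-- `Z` is the generator of the semigroup `S`: the strong derivative of `S` at `0`,
with its maximal domain, coincides with `Z`. -/
def IsGeneratorOf (S : ℝ → (X →L[ℝ] X)) (Z : X →ₗ.[ℝ] X) : Prop :=
  ∀ x y : X, DerivAtZero S x y ↔ ∃ hx : x ∈ Z.domain, Z ⟨x, hx⟩ = y

/-- Every subsequence of `u` has a weakly convergent subsubsequence. -/
def WeakSubCvg (u : ℕ → X) : Prop :=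
  ∀ k : ℕ → ℕ, StrictMono k → ∃ j : ℕ → ℕ, StrictMono j ∧ ∃ L : X,
    ∀ φ : StrongDual ℝ X, Tendsto (fun i => φ (u (k (j i)))) atTop (𝓝 (φ L))

/-- `(f, y)` belongs to the closure of the graph of `F'(0)`. -/
def InClosureGraphF (F : ℝ → (X →L[ℝ] X)) (f y : X) : Prop :=
  (f, y) ∈ closure {p : X × X | DerivAtZero F p.1 p.2}

/-! The operators `F(t/k)^i` are bounded by `M`, hence equicontinuous, so the set of `g` with
`F(t/k)^i g → g` as `i/k → 0` is closed. It contains the dense domain of `F'(0)`: for `ψ` there,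
telescoping gives `‖F(t/k)^i ψ - ψ‖ ≤ i M ‖F(t/k) ψ - ψ‖ = O(i/k)`. -/

open Asymptotics Set

/-- The filter `i / k → 0` on pairs with `0 < i` and `0 < k`. -/
def ratioNhdsZero : Filter (ℕ × ℕ) :=
  comap (fun p => (p.1 : ℝ) / p.2) (𝓝 0) ⊓ 𝓟 {p | 0 < p.1 ∧ 0 < p.2}

theorem tendsto_ratio_ratioNhdsZero :
    Tendsto (fun p : ℕ × ℕ => (p.1 : ℝ) / p.2) ratioNhdsZero (𝓝 0) :=
  tendsto_comap.mono_left inf_le_left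

theorem tendsto_div_snd_ratioNhdsZero {t : ℝ} (ht : 0 < t) :
    Tendsto (fun p : ℕ × ℕ => t / p.2) ratioNhdsZero (𝓝[>] 0) := by
  have hpos : ∀ᶠ p : ℕ × ℕ in ratioNhdsZero, 0 < p.1 ∧ 0 < p.2 :=
    mem_inf_of_right (mem_principal_self _)
  refine tendsto_nhdsWithin_iff.2 ⟨?_, hpos.mono fun p hp => div_pos ht (Nat.cast_pos.2 hp.2)⟩
  refine squeeze_zero' (hpos.mono fun p _ => by positivity) (hpos.mono fun p hp => ?_)
    (by simpa using tendsto_ratio_ratioNhdsZero.const_mul t)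
  have h1 : (1 : ℝ) ≤ p.1 := by exact_mod_cast hp.1
  calc t / p.2 = t * (1 / p.2) := by ring
    _ ≤ t * (p.1 / p.2) := by gcongr

theorem exists_forall_ratio_lt_of_eventually {P : ℕ → ℕ → Prop}
    (h : ∀ᶠ p : ℕ × ℕ in ratioNhdsZero, P p.1 p.2) :
    ∃ δ > 0, ∀ i k : ℕ, 0 < i → 0 < k → (i : ℝ) / k < δ → P i k := by
  obtain ⟨δ, hδ, hP⟩ :=
    Metric.eventually_nhds_iff.1 (eventually_comap.1 (eventually_inf_principal.1 h))
  refine ⟨δ, hδ, fun i k hi hk hik => hP ?_ (i, k) rfl ⟨hi, hk⟩⟩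
  rwa [Real.dist_0_eq_abs, abs_of_nonneg (by positivity)]

theorem ContinuousLinearMap.norm_pow_apply_sub_le {𝕜 E : Type*} [NontriviallyNormedField 𝕜]
    [NormedAddCommGroup E] [NormedSpace 𝕜 E] (T : E →L[𝕜] E) {M : ℝ} (hT : ∀ n, ‖T ^ n‖ ≤ M)
    (i : ℕ) (x : E) : ‖(T ^ i) x - x‖ ≤ i * (M * ‖T x - x‖) := by
  induction i with
  | zero => simp
  | succ n ih =>
    have hsplit : (T ^ (n + 1)) x - x = (T ^ n) (T x - x) + ((T ^ n) x - x) := by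
      rw [map_sub, pow_succ, mul_apply_eq_comp]; abel
    calc ‖(T ^ (n + 1)) x - x‖ ≤ ‖(T ^ n) (T x - x)‖ + ‖(T ^ n) x - x‖ := hsplit ▸ norm_add_le _ _
      _ ≤ M * ‖T x - x‖ + n * (M * ‖T x - x‖) :=
        add_le_add ((T ^ n).le_of_opNorm_le (hT n) _) ih
      _ = (n + 1 : ℕ) * (M * ‖T x - x‖) := by push_cast; ring

variable {E : Type*} [NormedAddCommGroup E] [NormedSpace ℝ E]

theorem DerivAtZero.hasDerivWithinAt {F : ℝ → (E →L[ℝ] E)} {ψ y : E} (h : DerivAtZero F ψ y) :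
    HasDerivWithinAt (fun s => F s ψ) y (Ioi 0) 0 := by
  rw [hasDerivWithinAt_iff_tendsto_slope' (s := Ioi 0) (lt_irrefl 0)]
  exact h.congr fun s => by rw [slope_def_module, sub_zero]

theorem MemFClass.norm_pow_le {F : ℝ → (E →L[ℝ] E)} {M : ℝ} (hF : MemFClass F M 0) (hM : 1 ≤ M)
    {s : ℝ} (hs : 0 ≤ s) (k n : ℕ) : ‖F (s / k) ^ n‖ ≤ M := by
  have h_one : ‖(1 : E →L[ℝ] E)‖ ≤ M := ContinuousLinearMap.norm_id_le.trans hM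
  rcases Nat.eq_zero_or_pos n with rfl | hn
  · simpa using h_one
  rcases Nat.eq_zero_or_pos k with rfl | hk
  · simpa [hF.1] using h_one
  simpa using hF.2.1 k n hk hn s hs

theorem MemFClass.tendsto_pow_apply_of_derivAtZero {F : ℝ → (E →L[ℝ] E)} {M : ℝ}
    (hF : MemFClass F M 0) (hM : 1 ≤ M) {t : ℝ} (ht : 0 < t) {ψ y : E} (hψ : DerivAtZero F ψ y) :
    Tendsto (fun p : ℕ × ℕ => (F (t / p.2) ^ p.1) ψ) ratioNhdsZero (𝓝 ψ) := by
  rw [← tendsto_sub_nhds_zero_iff]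
  have hpow : (fun p : ℕ × ℕ => (F (t / p.2) ^ p.1) ψ - ψ) =O[ratioNhdsZero]
      fun p => (p.1 : ℝ) • (F (t / p.2) ψ - ψ) :=
    IsBigO.of_bound M (Eventually.of_forall fun p => by
      rw [norm_smul, Real.norm_natCast, mul_left_comm]
      exact (F (t / p.2)).norm_pow_apply_sub_le (hF.norm_pow_le hM ht.le p.2) p.1 ψ)
  have hstep : (fun p : ℕ × ℕ => F (t / p.2) ψ - ψ) =O[ratioNhdsZero] fun p => t / p.2 := by
    simpa [Function.comp_def, hF.1] using
      hψ.hasDerivWithinAt.hasFDerivWithinAt.isBigO_sub.comp_tendsto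
        (tendsto_div_snd_ratioNhdsZero ht)
  refine (hpow.trans ((isBigO_refl (fun p : ℕ × ℕ => (p.1 : ℝ)) _).smul hstep)).trans_tendsto ?_
  simpa [smul_eq_mul, mul_div_left_comm] using tendsto_ratio_ratioNhdsZero.const_mul t

theorem MemFClass.tendsto_pow_apply {F : ℝ → (E →L[ℝ] E)} {M : ℝ} (hF : MemFClass F M 0)
    (hM : 1 ≤ M) {t : ℝ} (ht : 0 < t) (g : E) :
    Tendsto (fun p : ℕ × ℕ => (F (t / p.2) ^ p.1) g) ratioNhdsZero (𝓝 g) := by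
  have hbound : ∃ C, ∀ p : ℕ × ℕ, ‖F (t / p.2) ^ p.1‖ ≤ C :=
    ⟨M, fun p => hF.norm_pow_le hM ht.le p.2 p.1⟩
  have hequi : Equicontinuous fun p : ℕ × ℕ => ⇑(F (t / p.2) ^ p.1) :=
    ((NormedSpace.equicontinuous_TFAE fun p : ℕ × ℕ => F (t / p.2) ^ p.1).out 1 5).2 hbound
  have hclosed := hequi.isClosed_setOfPred_tendsto (l := ratioNhdsZero) continuous_id
  refine hclosed.closure_subset_iff.2 ?_ (hF.2.2 g)
  rintro ψ ⟨y, hy⟩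
  exact hF.tendsto_pow_apply_of_derivAtZero hM ht hy

/-- Lemma 1: for `F ∈ 𝓕^X_{M,0}` and `t > 0`,
`(F(t/k)^i − I)g → 0` as `i/k → 0`, for every `g ∈ X`. -/
theorem chernoff_lemma1 (F : ℝ → (X →L[ℝ] X)) (M : ℝ) (hM : 1 ≤ M)
    (hF : MemFClass F M 0) (t : ℝ) (ht : 0 < t) (g : X) :
    ∀ ε > 0, ∃ δ > 0, ∀ i k : ℕ, 0 < i → 0 < k → (i : ℝ) / k < δ →
      ‖((F (t / k)) ^ i) g - g‖ < ε := by
  intro ε hε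
  have h := Metric.tendsto_nhds.1 (hF.tendsto_pow_apply hM ht g) ε hε
  simp only [dist_eq_norm] at h
  exact exists_forall_ratio_lt_of_eventually h
end
end

section
/- Under the assumptions of the subsequence construction (F ∈ 𝓕^X_{M,a}, t > 0, separable closed subspaces Φ ⊂ X, Ψ ⊂ X*, subsequence (g_k) such that T_s(g, φ) := lim_{k→∞} (F(t/g_k)^{[g_k s/t]} g, φ) exists for all g ∈ Φ, φ ∈ Ψ, s ≥ 0): if f ∈ D(closure of F'(0)) ∩ Φ and (closure of F'(0))f ∈ Φ, then d/ds T_s(f, φ) = T_s((closure of F'(0))f, φ) for all s ≥ 0 and φ ∈ Ψ. -/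
open Filter Topology MeasureTheory

noncomputable section

variable {X : Type*} [NormedAddCommGroup X] [NormedSpace ℝ X] [CompleteSpace X]

/-!
Write `u = t/n`, `G = F(u)` and `m(s) = [ns/t]`. For `(ψ, y')` in the graph of `F'(0)`,
summation by parts gives
`G^{m(s₂)} g - G^{m(s₁)} g - u ∑_{m(s₁) ≤ j < m(s₂)} G^j w
  = (G^{m(s₂)} - G^{m(s₁)}) (g - ψ) + ∑_{m(s₁) ≤ j < m(s₂)} G^j (G ψ - ψ - u w)`,
and since `‖G^j‖ ≤ M e^{|a| s₂}` and `G ψ - ψ = u y' + o(u)`, in the limit along `g_k` the right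
side is at most a constant times `2‖g - ψ‖ + (s₂ - s₁)‖y' - w‖`.
With `w = 0` and `ψ` close to `g` (the domain of `F'(0)` is dense) this makes `s ↦ T_s(g, φ)`
continuous. With `g = f`, `w = y`, the sum is the integral of a step function converging boundedly
to `T_r(y, φ)`, so it tends to `∫_{s₁}^{s₂} T_r(y, φ) dr`; letting `(ψ, y') → (f, y)` gives
`T_{s₂}(f, φ) - T_{s₁}(f, φ) = ∫_{s₁}^{s₂} T_r(y, φ) dr`, and the fundamental theorem of calculus
concludes.
-/

open Finset

section General

variable {E : Type*} [NormedAddCommGroup E] [NormedSpace ℝ E]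

theorem continuousWithinAt_of_forall_dist_le {α β : Type*} [PseudoMetricSpace α]
    [PseudoMetricSpace β] {f : α → β} {s : Set α} {x : α}
    (h : ∀ ε > 0, ∃ L, ∀ᶠ y in 𝓝[s] x, dist (f y) (f x) ≤ ε + L * dist y x) :
    ContinuousWithinAt f s x := by
  refine Metric.tendsto_nhds.2 fun ε hε => ?_
  obtain ⟨L, hL⟩ := h (ε / 2) (half_pos hε)
  have hδ : 0 < ε / (2 * (|L| + 1)) := by positivity
  have hnear : ∀ᶠ y in 𝓝[s] x, dist y x < ε / (2 * (|L| + 1)) :=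
    nhdsWithin_le_nhds (Metric.ball_mem_nhds x hδ)
  filter_upwards [hL, hnear] with y hy hyx
  have hLd : L * dist y x ≤ |L| * (ε / (2 * (|L| + 1))) :=
    (mul_le_mul_of_nonneg_right (le_abs_self L) dist_nonneg).trans
      (mul_le_mul_of_nonneg_left hyx.le (abs_nonneg L))
  have hLε : |L| * (ε / (2 * (|L| + 1))) < ε / 2 := by
    rw [mul_div_assoc', div_lt_div_iff₀ (by positivity) two_pos]
    nlinarith [abs_nonneg L]
  linarith

theorem norm_sub_smul_le {u : ℝ} (hu : 0 < u) (v w y : E) :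
    ‖v - u • w‖ ≤ u * (‖u⁻¹ • v - y‖ + ‖y - w‖) := by
  have hsplit : v - u • w = u • (u⁻¹ • v - y) + u • (y - w) := by
    rw [smul_sub, smul_sub, smul_inv_smul₀ hu.ne']
    abel
  rw [hsplit, mul_add]
  refine (norm_add_le _ _).trans_eq ?_
  rw [norm_smul, norm_smul, Real.norm_of_nonneg hu.le]

theorem norm_pow_sub_pow_sub_sum_le (G : E →L[ℝ] E) {K : ℝ} {m₁ m₂ : ℕ} (hm : m₁ ≤ m₂)
    (hG : ∀ j ≤ m₂, ‖G ^ j‖ ≤ K) (g ψ w : E) :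
    ‖(G ^ m₂) g - (G ^ m₁) g - ∑ j ∈ Ico m₁ m₂, (G ^ j) w‖
      ≤ K * (2 * ‖g - ψ‖ + (m₂ - m₁) * ‖G ψ - ψ - w‖) := by
  have htelescope : (G ^ m₂) ψ - (G ^ m₁) ψ = ∑ j ∈ Ico m₁ m₂, (G ^ j) (G ψ - ψ) := by
    rw [← sum_Ico_sub (fun j => (G ^ j) ψ) hm]
    refine sum_congr rfl fun j _ => ?_
    rw [map_sub, pow_succ]
    rfl
  have hsplit : (G ^ m₂) g - (G ^ m₁) g - ∑ j ∈ Ico m₁ m₂, (G ^ j) w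
      = (G ^ m₂) (g - ψ) - (G ^ m₁) (g - ψ) + ∑ j ∈ Ico m₁ m₂, (G ^ j) (G ψ - ψ - w) := by
    simp only [map_sub, sum_sub_distrib] at htelescope ⊢
    rw [← htelescope]
    abel
  have hsum : ‖∑ j ∈ Ico m₁ m₂, (G ^ j) (G ψ - ψ - w)‖ ≤ (m₂ - m₁) * (K * ‖G ψ - ψ - w‖) := by
    refine (norm_sum_le _ _).trans ?_
    refine (sum_le_sum fun j hj => (G ^ j).le_of_opNorm_le (hG j (mem_Ico.1 hj).2.le) _).trans_eq ?_
    rw [sum_const, Nat.card_Ico, nsmul_eq_mul, Nat.cast_sub hm]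
  rw [hsplit]
  calc _ ≤ ‖(G ^ m₂) (g - ψ)‖ + ‖(G ^ m₁) (g - ψ)‖ + ‖∑ j ∈ Ico m₁ m₂, (G ^ j) (G ψ - ψ - w)‖ :=
        (norm_add_le _ _).trans (add_le_add_left (norm_sub_le _ _) _)
    _ ≤ K * ‖g - ψ‖ + K * ‖g - ψ‖ + (m₂ - m₁) * (K * ‖G ψ - ψ - w‖) := by
        gcongr
        · exact (G ^ m₂).le_of_opNorm_le (hG m₂ le_rfl) _
        · exact (G ^ m₁).le_of_opNorm_le (hG m₁ hm) _
    _ = _ := by ring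

theorem integral_comp_floor_div [CompleteSpace E] (c : ℕ → E) {u : ℝ} (hu : 0 < u)
    {m₁ m₂ : ℕ} (hm : m₁ ≤ m₂) :
    ∫ x in m₁ * u..m₂ * u, c ⌊x / u⌋₊ = u • ∑ j ∈ Ico m₁ m₂, c j := by
  have hconst : ∀ j : ℕ, Set.EqOn (fun x => c ⌊x / u⌋₊) (fun _ => c j)
      (Set.Ioo (j * u) ((j + 1 : ℕ) * u)) := by
    intro j x hx
    have hx0 : 0 ≤ x / u := div_nonneg ((by positivity : (0 : ℝ) ≤ j * u).trans hx.1.le) hu.le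
    simp only
    congr 1
    rw [Nat.floor_eq_iff hx0, le_div_iff₀ hu, div_lt_iff₀ hu, ← Nat.cast_add_one]
    exact ⟨hx.1.le, hx.2⟩
  have hle : ∀ j : ℕ, (j : ℝ) * u ≤ (j + 1 : ℕ) * u := fun j => by gcongr; simp
  rw [← intervalIntegral.sum_integral_adjacent_intervals_Ico (a := fun j : ℕ => (j : ℝ) * u) hm,
    smul_sum]
  · refine sum_congr rfl fun j _ => ?_
    rw [intervalIntegral.integral_congr_Ioo_of_le (hle j) (hconst j),
      intervalIntegral.integral_const]
    push_cast
    ring_nf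
  · intro j _
    refine (intervalIntegrable_const (c := c j)).congr_uIoo ?_
    rw [Set.uIoo_of_le (hle j)]
    exact fun x hx => (hconst j hx).symm

theorem tendsto_intervalIntegral_of_dominated_of_tendsto_endpoints [CompleteSpace E]
    {V : ℕ → ℝ → E} {v : ℝ → E} {α β : ℕ → ℝ} {A B a b C : ℝ}
    (ha : a ∈ Set.Icc A B) (hb : b ∈ Set.Icc A B)
    (hα : ∀ᶠ k in atTop, α k ∈ Set.Icc A B) (hβ : ∀ᶠ k in atTop, β k ∈ Set.Icc A B)
    (hαa : Tendsto α atTop (𝓝 a)) (hβb : Tendsto β atTop (𝓝 b))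
    (hmeas : ∀ k, AEStronglyMeasurable (V k))
    (hbound : ∀ᶠ k in atTop, ∀ x ∈ Set.Icc A B, ‖V k x‖ ≤ C)
    (hlim : ∀ x ∈ Set.Icc A B, Tendsto (fun k => V k x) atTop (𝓝 (v x))) :
    Tendsto (fun k => ∫ x in α k..β k, V k x) atTop (𝓝 (∫ x in a..b, v x)) := by
  have hsub : Set.uIoc a b ⊆ Set.Icc A B := Set.uIoc_subset_uIcc.trans (Set.uIcc_subset_Icc ha hb)
  have hfixed : Tendsto (fun k => ∫ x in a..b, V k x) atTop (𝓝 (∫ x in a..b, v x)) := by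
    refine intervalIntegral.tendsto_integral_filter_of_dominated_convergence (fun _ => C)
      (Eventually.of_forall fun k => (hmeas k).restrict) ?_ intervalIntegrable_const
      (ae_of_all _ fun x hx => hlim x (hsub hx))
    filter_upwards [hbound] with k hk
    exact ae_of_all _ fun x hx => hk x (hsub hx)
  have hedge : Tendsto (fun k => C * (dist (β k) b + dist (α k) a)) atTop (𝓝 0) := by
    simpa using ((tendsto_iff_dist_tendsto_zero.1 hβb).add
      (tendsto_iff_dist_tendsto_zero.1 hαa)).const_mul C
  have hdiff : Tendsto (fun k => (∫ x in α k..β k, V k x) - ∫ x in a..b, V k x) atTop (𝓝 0) := by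
    refine squeeze_zero_norm' ?_ hedge
    filter_upwards [hα, hβ, hbound] with k hαk hβk hk
    have hint : ∀ x ∈ Set.Icc A B, ∀ y ∈ Set.Icc A B, IntervalIntegrable (V k) volume x y :=
      fun x hx y hy => (Measure.integrableOn_of_bounded measure_Icc_lt_top.ne (hmeas k)
        (ae_restrict_of_forall_mem measurableSet_Icc hk)).mono_set
          (Set.uIcc_subset_Icc hx hy) |>.intervalIntegrable
    have hnorm : ∀ x ∈ Set.Icc A B, ∀ y ∈ Set.Icc A B, ‖∫ z in x..y, V k z‖ ≤ C * dist y x :=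
      fun x hx y hy => by
        rw [Real.dist_eq]
        exact intervalIntegral.norm_integral_le_of_norm_le_const fun z hz =>
          hk z (Set.uIoc_subset_uIcc.trans (Set.uIcc_subset_Icc hx hy) hz)
    rw [intervalIntegral.integral_interval_sub_interval_comm' (hint _ hαk _ hβk)
      (hint _ ha _ hb) (hint _ hαk _ ha), mul_add]
    exact (norm_sub_le _ _).trans (add_le_add (hnorm _ hb _ hβk) (hnorm _ ha _ hαk))
  simpa using hdiff.add hfixed

theorem hasDerivWithinAt_Ici_of_eq_add_integral [CompleteSpace E] {G v : ℝ → E} {a s : ℝ}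
    (hv : ContinuousOn v (Set.Ici a)) (hG : ∀ r ∈ Set.Ici a, G r = G a + ∫ x in a..r, v x)
    (hs : s ∈ Set.Ici a) : HasDerivWithinAt G (v s) (Set.Ici a) s := by
  have : Fact (s ∈ Set.Icc a (s + 1)) := ⟨⟨hs, by linarith⟩⟩
  have hvI : ContinuousOn v (Set.Icc a (s + 1)) := hv.mono Set.Icc_subset_Ici_self
  have hderiv : HasDerivWithinAt (fun r => G a + ∫ x in a..r, v x) (v s) (Set.Icc a (s + 1)) s :=
    (intervalIntegral.integral_hasDerivWithinAt_right
      (hv.mono (Set.uIcc_of_le (Set.mem_Ici.1 hs) ▸ Set.Icc_subset_Ici_self)).intervalIntegrable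
      (hvI.stronglyMeasurableAtFilter_nhdsWithin measurableSet_Icc s)
      (hvI s this.out)).const_add (G a)
  refine (hderiv.congr (fun r hr => hG r hr.1) (hG s hs)).mono_of_mem_nhdsWithin ?_
  exact inter_mem_nhdsWithin _ (Iic_mem_nhds (lt_add_one s))

end General

set_option linter.unusedSectionVars false

def stepCount (t : ℝ) (n : ℕ) (s : ℝ) : ℕ := ⌊(n : ℝ) * (s / t)⌋₊

def chernoffPow (F : ℝ → (X →L[ℝ] X)) (t : ℝ) (n : ℕ) (s : ℝ) : X →L[ℝ] X :=
  F (t / n) ^ stepCount t n s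

section StepCount

variable {t : ℝ}

theorem stepCount_eq_floor_div (t : ℝ) (n : ℕ) (s : ℝ) : stepCount t n s = ⌊s / (t / n)⌋₊ := by
  rw [stepCount, div_div_eq_mul_div, mul_div_assoc', mul_comm]

theorem stepCount_mul_le (ht : 0 < t) (n : ℕ) {s : ℝ} (hs : 0 ≤ s) :
    (stepCount t n s : ℝ) * (t / n) ≤ s := by
  rw [stepCount_eq_floor_div]
  rcases (Nat.cast_nonneg (α := ℝ) n).eq_or_lt with hn | hn
  · simp [← hn, hs]
  · exact (le_div_iff₀ (by positivity)).1 (Nat.floor_le (by positivity))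

theorem sub_lt_stepCount_mul (ht : 0 < t) {n : ℕ} (hn : 0 < n) (s : ℝ) :
    s - t / n < stepCount t n s * (t / n) := by
  rw [stepCount_eq_floor_div, sub_lt_iff_lt_add, ← add_one_mul]
  exact (div_lt_iff₀ (by positivity)).1 (Nat.lt_floor_add_one _)

theorem stepCount_mono (ht : 0 < t) (n : ℕ) {s₁ s₂ : ℝ} (h : s₁ ≤ s₂) :
    stepCount t n s₁ ≤ stepCount t n s₂ :=
  Nat.floor_le_floor (by gcongr)

variable {n : ℕ → ℕ}

theorem tendsto_div_natCast_nhdsGT (ht : 0 < t) (hn : Tendsto n atTop atTop) :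
    Tendsto (fun k => t / (n k : ℝ)) atTop (𝓝[>] 0) :=
  tendsto_nhdsWithin_iff.2 ⟨tendsto_const_nhds.div_atTop (tendsto_natCast_atTop_atTop.comp hn),
    (hn.eventually_gt_atTop 0).mono fun k hk => by simp only [Set.mem_Ioi]; positivity⟩

theorem tendsto_stepCount_mul (ht : 0 < t) (hn : Tendsto n atTop atTop) {s : ℝ} (hs : 0 ≤ s) :
    Tendsto (fun k => (stepCount t (n k) s : ℝ) * (t / n k)) atTop (𝓝 s) := by
  have hu := (tendsto_div_natCast_nhdsGT ht hn).mono_right nhdsWithin_le_nhds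
  refine tendsto_of_tendsto_of_tendsto_of_le_of_le' (by simpa using tendsto_const_nhds.sub hu)
    tendsto_const_nhds ?_ (Eventually.of_forall fun k => stepCount_mul_le ht _ hs)
  filter_upwards [hn.eventually_gt_atTop 0] with k hk using (sub_lt_stepCount_mul ht hk s).le

end StepCount

namespace MemFClass

variable {F : ℝ → (X →L[ℝ] X)} {M a t : ℝ} {n : ℕ → ℕ}

theorem norm_pow_le_s7 (hM : 1 ≤ M) (hF : MemFClass F M a) (ht : 0 ≤ t) {n m : ℕ} (hn : 0 < n)
    {S : ℝ} (hS : m * (t / n) ≤ S) : ‖F (t / n) ^ m‖ ≤ M * Real.exp (|a| * S) := by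
  have hmt : 0 ≤ (m : ℝ) * (t / n) := by positivity
  rcases Nat.eq_zero_or_pos m with rfl | hm
  · rw [pow_zero]
    refine ContinuousLinearMap.norm_id_le.trans (one_le_mul_of_one_le_of_one_le hM ?_)
    exact Real.one_le_exp (mul_nonneg (abs_nonneg a) (hmt.trans hS))
  · refine (hF.2.1 n m hn hm t ht).trans ?_
    gcongr
    calc a * m * t / n = a * (m * (t / n)) := by ring
      _ ≤ |a| * (m * (t / n)) := mul_le_mul_of_nonneg_right (le_abs_self a) hmt
      _ ≤ |a| * S := mul_le_mul_of_nonneg_left hS (abs_nonneg a)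

theorem norm_chernoffPow_le (hM : 1 ≤ M) (hF : MemFClass F M a) (ht : 0 < t) {n : ℕ}
    (hn : 0 < n) {s S : ℝ} (hs : 0 ≤ s) (hsS : s ≤ S) :
    ‖chernoffPow F t n s‖ ≤ M * Real.exp (|a| * S) :=
  hF.norm_pow_le_s7 hM ht.le hn ((stepCount_mul_le ht n hs).trans hsS)

theorem abs_sub_sub_le_of_derivAtZero (hM : 1 ≤ M) (hF : MemFClass F M a) (ht : 0 < t)
    (hn : Tendsto n atTop atTop) (φ : StrongDual ℝ X) {g w ψ y' : X} (hψ : DerivAtZero F ψ y')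
    {s₁ s₂ S A₁ A₂ I : ℝ} (h₁ : 0 ≤ s₁) (h₁₂ : s₁ ≤ s₂) (hS : s₂ ≤ S)
    (hA₁ : Tendsto (fun k => φ (chernoffPow F t (n k) s₁ g)) atTop (𝓝 A₁))
    (hA₂ : Tendsto (fun k => φ (chernoffPow F t (n k) s₂ g)) atTop (𝓝 A₂))
    (hI : Tendsto (fun k => φ (∑ j ∈ Ico (stepCount t (n k) s₁) (stepCount t (n k) s₂),
      (F (t / n k) ^ j) ((t / n k) • w))) atTop (𝓝 I)) :
    |A₂ - A₁ - I| ≤ ‖φ‖ * (M * Real.exp (|a| * S)) * (2 * ‖g - ψ‖ + (s₂ - s₁) * ‖y' - w‖) := by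
  set K := M * Real.exp (|a| * S)
  have hquot : Tendsto (fun k => ‖(t / n k)⁻¹ • (F (t / n k) ψ - F 0 ψ) - y'‖) atTop (𝓝 0) := by
    simpa using ((hψ.comp (tendsto_div_natCast_nhdsGT ht hn)).sub_const y').norm
  have hlen := (tendsto_stepCount_mul ht hn (h₁.trans h₁₂)).sub (tendsto_stepCount_mul ht hn h₁)
  have hbound := tendsto_const_nhds (x := ‖φ‖ * K) |>.mul <|
    tendsto_const_nhds (x := 2 * ‖g - ψ‖) |>.add <| hlen.mul (hquot.add_const ‖y' - w‖)
  rw [zero_add] at hbound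
  refine le_of_tendsto_of_tendsto ((hA₂.sub hA₁).sub hI).abs hbound ?_
  filter_upwards [hn.eventually_gt_atTop 0] with k hk
  set u := t / n k
  set m₁ := stepCount t (n k) s₁
  set m₂ := stepCount t (n k) s₂
  have hu : 0 < u := by positivity
  have hm : m₁ ≤ m₂ := stepCount_mono ht _ h₁₂
  have hpow : ∀ j ≤ m₂, ‖F u ^ j‖ ≤ K := fun j hj =>
    hF.norm_pow_le_s7 hM ht.le hk <| (mul_le_mul_of_nonneg_right (Nat.cast_le.2 hj) hu.le).trans
      ((stepCount_mul_le ht _ (h₁.trans h₁₂)).trans hS)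
  have hstep : ‖F u ψ - ψ - u • w‖ ≤ u * (‖u⁻¹ • (F u ψ - F 0 ψ) - y'‖ + ‖y' - w‖) := by
    simpa only [hF.1, one_apply_eq_self] using norm_sub_smul_le hu _ w y'
  have hm' : (0 : ℝ) ≤ m₂ - m₁ := sub_nonneg.2 (Nat.cast_le.2 hm)
  simp only [chernoffPow, ← map_sub, ← Real.norm_eq_abs]
  calc _ ≤ ‖φ‖ * ‖(F u ^ m₂) g - (F u ^ m₁) g - ∑ j ∈ Ico m₁ m₂, (F u ^ j) (u • w)‖ :=
        φ.le_opNorm _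
    _ ≤ ‖φ‖ * (K * (2 * ‖g - ψ‖ + (m₂ - m₁) * ‖F u ψ - ψ - u • w‖)) := by
        gcongr
        exact norm_pow_sub_pow_sub_sum_le (F u) hm hpow g ψ _
    _ ≤ ‖φ‖ * (K * (2 * ‖g - ψ‖
          + (m₂ - m₁) * (u * (‖u⁻¹ • (F u ψ - F 0 ψ) - y'‖ + ‖y' - w‖)))) := by
        gcongr
    _ = _ := by ring

theorem tendsto_riemannSum (hM : 1 ≤ M) (hF : MemFClass F M a) (ht : 0 < t)
    (hn : Tendsto n atTop atTop) (φ : StrongDual ℝ X) (y : X) {v : ℝ → ℝ}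
    (hv : ∀ s, 0 ≤ s → Tendsto (fun k => φ (chernoffPow F t (n k) s y)) atTop (𝓝 (v s)))
    {s₁ s₂ : ℝ} (h₁ : 0 ≤ s₁) (h₁₂ : s₁ ≤ s₂) :
    Tendsto (fun k => φ (∑ j ∈ Ico (stepCount t (n k) s₁) (stepCount t (n k) s₂),
      (F (t / n k) ^ j) ((t / n k) • y))) atTop (𝓝 (∫ r in s₁..s₂, v r)) := by
  have hstep : ∀ k, 0 < n k → φ (∑ j ∈ Ico (stepCount t (n k) s₁) (stepCount t (n k) s₂),
      (F (t / n k) ^ j) ((t / n k) • y)) = ∫ r in stepCount t (n k) s₁ * (t / n k)..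
        stepCount t (n k) s₂ * (t / n k), φ (chernoffPow F t (n k) r y) := by
    intro k hk
    have hfloor : (fun r => φ (chernoffPow F t (n k) r y))
        = fun r => (fun j => φ ((F (t / n k) ^ j) y)) ⌊r / (t / n k)⌋₊ :=
      funext fun r => by rw [chernoffPow, stepCount_eq_floor_div]
    rw [hfloor, integral_comp_floor_div (fun j => φ ((F (t / n k) ^ j) y)) (by positivity)
      (stepCount_mono ht _ h₁₂)]
    simp only [map_sum, map_smul, smul_sum]
  have hmeas : ∀ k, AEStronglyMeasurable (fun r => φ (chernoffPow F t (n k) r y)) :=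
    fun k => ((measurable_from_nat (f := fun j => φ ((F (t / n k) ^ j) y))).comp
      (Nat.measurable_floor.comp ((measurable_id.div_const t).const_mul _))).aestronglyMeasurable
  have hbound : ∀ᶠ k in atTop, ∀ r ∈ Set.Icc 0 s₂,
      ‖φ (chernoffPow F t (n k) r y)‖ ≤ ‖φ‖ * (M * Real.exp (|a| * s₂)) * ‖y‖ := by
    filter_upwards [hn.eventually_gt_atTop 0] with k hk r hr
    refine (φ.le_opNorm _).trans ?_
    rw [mul_assoc]
    gcongr
    exact (chernoffPow F t (n k) r).le_of_opNorm_le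
      (hF.norm_chernoffPow_le hM ht hk hr.1 hr.2) y
  have hendpoint : ∀ s ∈ Set.Icc 0 s₂,
      ∀ᶠ k in atTop, (stepCount t (n k) s : ℝ) * (t / n k) ∈ Set.Icc 0 s₂ := fun s hs =>
    Eventually.of_forall fun k => ⟨by positivity, (stepCount_mul_le ht _ hs.1).trans hs.2⟩
  have hs₁ : s₁ ∈ Set.Icc 0 s₂ := ⟨h₁, h₁₂⟩
  have hs₂ : s₂ ∈ Set.Icc 0 s₂ := ⟨h₁.trans h₁₂, le_rfl⟩
  refine (tendsto_intervalIntegral_of_dominated_of_tendsto_endpoints hs₁ hs₂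
    (hendpoint s₁ hs₁) (hendpoint s₂ hs₂) (tendsto_stepCount_mul ht hn h₁)
    (tendsto_stepCount_mul ht hn hs₂.1) hmeas hbound (fun r hr => hv r hr.1)).congr' ?_
  filter_upwards [hn.eventually_gt_atTop 0] with k hk using (hstep k hk).symm

theorem abs_sub_le_of_derivAtZero (hM : 1 ≤ M) (hF : MemFClass F M a) (ht : 0 < t)
    (hn : Tendsto n atTop atTop) (φ : StrongDual ℝ X) {g : X} {v : ℝ → ℝ}
    (hv : ∀ s, 0 ≤ s → Tendsto (fun k => φ (chernoffPow F t (n k) s g)) atTop (𝓝 (v s)))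
    {ψ y' : X} (hψ : DerivAtZero F ψ y') {s₁ s₂ S : ℝ} (h₁ : 0 ≤ s₁) (h₂ : 0 ≤ s₂)
    (h₁S : s₁ ≤ S) (h₂S : s₂ ≤ S) :
    |v s₂ - v s₁| ≤ ‖φ‖ * (M * Real.exp (|a| * S)) * (2 * ‖g - ψ‖ + |s₂ - s₁| * ‖y'‖) := by
  wlog h₁₂ : s₁ ≤ s₂ generalizing s₁ s₂
  · rw [abs_sub_comm, abs_sub_comm s₂]
    exact this h₂ h₁ h₂S h₁S (le_of_not_ge h₁₂)
  have hI : Tendsto (fun k => φ (∑ j ∈ Ico (stepCount t (n k) s₁) (stepCount t (n k) s₂),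
      (F (t / n k) ^ j) ((t / n k) • (0 : X)))) atTop (𝓝 0) := by
    simp only [smul_zero, map_zero, sum_const_zero]
    exact tendsto_const_nhds
  simpa [abs_of_nonneg (sub_nonneg.2 h₁₂)] using
    hF.abs_sub_sub_le_of_derivAtZero hM ht hn φ hψ h₁ h₁₂ h₂S (hv s₁ h₁) (hv s₂ h₂) hI

theorem continuousOn_of_tendsto_chernoffPow (hM : 1 ≤ M) (hF : MemFClass F M a) (ht : 0 < t)
    (hn : Tendsto n atTop atTop) (φ : StrongDual ℝ X) {g : X} {v : ℝ → ℝ}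
    (hv : ∀ s, 0 ≤ s → Tendsto (fun k => φ (chernoffPow F t (n k) s g)) atTop (𝓝 (v s))) :
    ContinuousOn v (Set.Ici 0) := by
  intro s hs
  refine continuousWithinAt_of_forall_dist_le fun ε hε => ?_
  set C := ‖φ‖ * (M * Real.exp (|a| * (s + 1)))
  have hC : 0 ≤ C := by have := zero_le_one.trans hM; positivity
  obtain ⟨ψ, ⟨y', hψ⟩, hgψ⟩ := hF.2.2.exists_dist_lt g (show 0 < ε / (2 * (C + 1)) by positivity)
  have hclose : 2 * C * ‖g - ψ‖ ≤ ε :=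
    calc 2 * C * ‖g - ψ‖ ≤ 2 * C * (ε / (2 * (C + 1))) := by
          rw [← dist_eq_norm]; gcongr
      _ = ε * (C / (C + 1)) := by field_simp
      _ ≤ ε := mul_le_of_le_one_right hε.le ((div_le_one (by positivity)).2 (by linarith))
  refine ⟨C * ‖y'‖, ?_⟩
  filter_upwards [self_mem_nhdsWithin, nhdsWithin_le_nhds (Iio_mem_nhds (lt_add_one s))]
    with r hr hrs
  rw [Real.dist_eq, Real.dist_eq]
  calc |v r - v s| ≤ C * (2 * ‖g - ψ‖ + |r - s| * ‖y'‖) :=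
        hF.abs_sub_le_of_derivAtZero hM ht hn φ hv hψ hs hr (by linarith) (le_of_lt hrs)
    _ ≤ ε + C * ‖y'‖ * |r - s| := by linarith

theorem sub_eq_integral_of_inClosureGraphF (hM : 1 ≤ M) (hF : MemFClass F M a) (ht : 0 < t)
    (hn : Tendsto n atTop atTop) (φ : StrongDual ℝ X) {f y : X} (hfy : InClosureGraphF F f y)
    {u v : ℝ → ℝ}
    (hu : ∀ s, 0 ≤ s → Tendsto (fun k => φ (chernoffPow F t (n k) s f)) atTop (𝓝 (u s)))
    (hv : ∀ s, 0 ≤ s → Tendsto (fun k => φ (chernoffPow F t (n k) s y)) atTop (𝓝 (v s)))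
    {s₁ s₂ : ℝ} (h₁ : 0 ≤ s₁) (h₁₂ : s₁ ≤ s₂) :
    u s₂ - u s₁ = ∫ r in s₁..s₂, v r := by
  set C := ‖φ‖ * (M * Real.exp (|a| * s₂))
  set Z := {p : X × X |
    |u s₂ - u s₁ - ∫ r in s₁..s₂, v r| ≤ C * (2 * ‖f - p.1‖ + (s₂ - s₁) * ‖p.2 - y‖)}
  have hZ : IsClosed Z := isClosed_le continuous_const (by fun_prop)
  have hgraph : {p : X × X | DerivAtZero F p.1 p.2} ⊆ Z := fun p hp =>
    hF.abs_sub_sub_le_of_derivAtZero hM ht hn φ hp h₁ h₁₂ le_rfl (hu s₁ h₁) (hu s₂ (h₁.trans h₁₂))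
      (hF.tendsto_riemannSum hM ht hn φ y hv h₁ h₁₂)
  have hfyZ : (f, y) ∈ Z := hZ.closure_subset_iff.2 hgraph hfy
  simpa [Z, sub_eq_zero] using hfyZ

end MemFClass

theorem chernoff_lemma5_general (F : ℝ → (X →L[ℝ] X)) (M a : ℝ) (hM : 1 ≤ M)
    (hF : MemFClass F M a) (t : ℝ) (ht : 0 < t)
    (Φ : Submodule ℝ X)
    (Ψ : Submodule ℝ (StrongDual ℝ X))
    (gk : ℕ → ℕ) (hgk : StrictMono gk)
    (T : ℝ → X → StrongDual ℝ X → ℝ)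
    (hT : ∀ s : ℝ, 0 ≤ s → ∀ g ∈ Φ, ∀ φ ∈ Ψ,
      Tendsto (fun k : ℕ => φ (((F (t / (gk k))) ^ ⌊(gk k : ℝ) * (s / t)⌋₊) g))
        atTop (𝓝 (T s g φ)))
    (f y : X) (hfy : InClosureGraphF F f y) (hfΦ : f ∈ Φ) (hyΦ : y ∈ Φ) :
    ∀ s : ℝ, 0 ≤ s → ∀ φ ∈ Ψ,
      HasDerivWithinAt (fun r => T r f φ) (T s y φ) (Set.Ici (0 : ℝ)) s := by
  intro s hs φ hφ
  have hn : Tendsto gk atTop atTop := hgk.tendsto_atTop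
  have hf := fun r hr => hT r hr f hfΦ φ hφ
  have hy := fun r hr => hT r hr y hyΦ φ hφ
  refine hasDerivWithinAt_Ici_of_eq_add_integral
    (hF.continuousOn_of_tendsto_chernoffPow hM ht hn φ hy) (fun r hr => ?_) hs
  rw [← hF.sub_eq_integral_of_inClosureGraphF hM ht hn φ hfy hf hy le_rfl hr]
  ring

/-- Lemma 5: under the subsequence construction, if
`f ∈ D(closure of F'(0)) ∩ Φ` with `(closure of F'(0))f = y ∈ Φ`, then
`d/ds T_s(f, φ) = T_s(y, φ)` for all `s ≥ 0` and `φ ∈ Ψ`. -/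
theorem chernoff_lemma5 (F : ℝ → (X →L[ℝ] X)) (M a : ℝ) (hM : 1 ≤ M)
    (hF : MemFClass F M a) (t : ℝ) (ht : 0 < t)
    (Φ : Submodule ℝ X) (hΦc : IsClosed (Φ : Set X))
    (hΦs : TopologicalSpace.IsSeparable (Φ : Set X))
    (Ψ : Submodule ℝ (StrongDual ℝ X)) (hΨc : IsClosed (Ψ : Set (StrongDual ℝ X)))
    (hΨs : TopologicalSpace.IsSeparable (Ψ : Set (StrongDual ℝ X)))
    (gk : ℕ → ℕ) (hgk : StrictMono gk)
    (T : ℝ → X → StrongDual ℝ X → ℝ)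
    (hT : ∀ s : ℝ, 0 ≤ s → ∀ g ∈ Φ, ∀ φ ∈ Ψ,
      Tendsto (fun k : ℕ => φ (((F (t / (gk k))) ^ ⌊(gk k : ℝ) * (s / t)⌋₊) g))
        atTop (𝓝 (T s g φ)))
    (f y : X) (hfy : InClosureGraphF F f y) (hfΦ : f ∈ Φ) (hyΦ : y ∈ Φ) :
    ∀ s : ℝ, 0 ≤ s → ∀ φ ∈ Ψ,
      HasDerivWithinAt (fun r => T r f φ) (T s y φ) (Set.Ici (0 : ℝ)) s :=
  chernoff_lemma5_general F M a hM hF t ht Φ Ψ gk hgk T hT f y hfy hfΦ hyΦ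
end
end
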